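/- If G is a connected graph on at least two vertices and x ∈ V(G), then γ_cg(G|x) ≥ ⌈γ_cg(G)/2⌉. -/

import Mathlib

open Finset

namespace ConnDomGame

variable {V : Type*} [Fintype V] [DecidableEq V]

/-- The closed neighborhood of a finite set of vertices. -/
def nbhd (G : SimpleGraph V) [DecidableRel G.Adj] (D : Finset V) : Finset V :=
  univ.filter fun u => u ∈ D ∨ ∃ v ∈ D, G.Adj u v

/-- The legal moves in the connected domination game on `G` with predominated set `S`,
from the position where the set of played vertices is `D`: a legal move must dominate
a not-yet-dominated vertex and (except for the first move) be adjacent to a played vertex. -/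
def legalMoves (G : SimpleGraph V) [DecidableRel G.Adj] (S D : Finset V) : Finset V :=
  univ.filter fun v =>
    ¬ (nbhd G {v} ⊆ S ∪ nbhd G D) ∧ (D = ∅ ∨ ∃ u ∈ D, G.Adj v u)

/-- Optimal number of further moves in the connected domination game on `G` with
predominated set `S`, from the position with played set `D`; `turn = true` means
Dominator (the minimizer) is to move.  The value is `⊤` if the player to move can
force the game to get stuck with an undominated vertex remaining.  The fuel
argument `n` is sufficient whenever `n + D.card ≥ Fintype.card V`. -/
noncomputable def val (G : SimpleGraph V) [DecidableRel G.Adj] (S : Finset V) :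
    Bool → ℕ → Finset V → ℕ∞
  | _, 0, D => if univ ⊆ S ∪ nbhd G D then 0 else ⊤
  | turn, n + 1, D =>
    if h : (legalMoves G S D).Nonempty then
      if turn then
        1 + (legalMoves G S D).inf' h fun v => val G S false n (insert v D)
      else
        1 + (legalMoves G S D).sup' h fun v => val G S true n (insert v D)
    else if univ ⊆ S ∪ nbhd G D then 0 else ⊤

/-- The Dominator-start game connected domination number of `G` with the vertices of `S`
predominated (`γ_cg(G|S)`; for `S = ∅` this is `γ_cg(G)`). -/
noncomputable def gammaCG (G : SimpleGraph V) [DecidableRel G.Adj] (S : Finset V) : ℕ∞ :=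
  val G S true (Fintype.card V) ∅

/-- The Staller-start game connected domination number of `G` with `S` predominated. -/
noncomputable def gammaCG' (G : SimpleGraph V) [DecidableRel G.Adj] (S : Finset V) : ℕ∞ :=
  val G S false (Fintype.card V) ∅

/-- The connected domination number of `G` with the set `S` predominated:
minimum size of a set `D` inducing a connected subgraph and dominating all
vertices outside `S`. -/
noncomputable def gammaC (G : SimpleGraph V) (S : Finset V) : ℕ :=
  sInf {k | ∃ D : Finset V, D.card = k ∧ (G.induce (D : Set V)).Connected ∧
    ∀ u, u ∈ S ∨ u ∈ D ∨ ∃ v ∈ D, G.Adj u v}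

/-- `l` is a legal sequence of first moves of the connected domination game on `G`
with predominated set `S`. -/
def LegalSeq (G : SimpleGraph V) [DecidableRel G.Adj] (S : Finset V) (l : List V) : Prop :=
  ∀ i (h : i < l.length), l.get ⟨i, h⟩ ∈ legalMoves G S (l.take i).toFinset

end ConnDomGame

namespace ConnDomGame

variable {V : Type*} [Fintype V] [DecidableEq V]

variable {G : SimpleGraph V} [DecidableRel G.Adj] {S D E P Q : Finset V} {u v x : V}

lemma mem_nbhd : u ∈ nbhd G D ↔ u ∈ D ∨ ∃ v ∈ D, G.Adj u v := by
  simp [nbhd]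

lemma subset_nbhd : D ⊆ nbhd G D := fun u hu => mem_nbhd.2 (Or.inl hu)

lemma nbhd_mono (h : D ⊆ E) : nbhd G D ⊆ nbhd G E := by
  intro u hu
  rcases mem_nbhd.1 hu with h1 | ⟨w, hw, ha⟩
  · exact mem_nbhd.2 (Or.inl (h h1))
  · exact mem_nbhd.2 (Or.inr ⟨w, h hw, ha⟩)

lemma nbhd_union : nbhd G (D ∪ E) = nbhd G D ∪ nbhd G E := by
  ext u
  simp only [mem_nbhd, mem_union]
  aesop

lemma nbhd_insert : nbhd G (insert v D) = nbhd G {v} ∪ nbhd G D := by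
  rw [insert_eq, nbhd_union]

lemma nbhd_empty : nbhd G (∅ : Finset V) = ∅ := by
  ext u; simp [mem_nbhd]

lemma mem_legalMoves :
    v ∈ legalMoves G S D ↔
      ¬ (nbhd G {v} ⊆ S ∪ nbhd G D) ∧ (D = ∅ ∨ ∃ u ∈ D, G.Adj v u) := by
  simp [legalMoves]

lemma legalMoves_not_mem (h : v ∈ legalMoves G S D) : v ∉ D := by
  intro hv
  exact (mem_legalMoves.1 h).1 ((nbhd_mono (singleton_subset_iff.2 hv)).trans
    subset_union_right)

lemma legalMoves_anti (hS : S ⊆ E) : legalMoves G E D ⊆ legalMoves G S D := by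
  intro v hv
  rcases mem_legalMoves.1 hv with ⟨h1, h2⟩
  exact mem_legalMoves.2 ⟨fun hc => h1 (hc.trans (union_subset_union_left hS)), h2⟩

lemma val_covered (h : univ ⊆ S ∪ nbhd G D) : ∀ τ n, val G S τ n D = 0 := by
  intro τ n
  have hL : legalMoves G S D = ∅ := by
    rw [eq_empty_iff_forall_notMem]
    intro v hv
    exact (mem_legalMoves.1 hv).1 ((subset_univ _).trans h)
  cases n with
  | zero => simp [val, h]
  | succ n => simp [val, hL, h]

lemma eq_univ_of_card_le (h : Fintype.card V ≤ D.card) : D = univ := by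
  apply Finset.eq_univ_of_card
  exact le_antisymm (Finset.card_le_univ D) (by simpa [Finset.card_univ] using h)


lemma val_eq_of_dominated (hx : x ∈ nbhd G D) :
    ∀ n τ, val G ∅ τ n D = val G {x} τ n D := by
  have key : ∀ n D, x ∈ nbhd G D → ∀ τ, val G (∅ : Finset V) τ n D = val G {x} τ n D := by
    intro n
    induction n with
    | zero =>
      intro D hx τ
      have hs : (∅ : Finset V) ∪ nbhd G D = {x} ∪ nbhd G D := by
        rw [empty_union]
        exact (union_eq_right.2 (singleton_subset_iff.2 hx)).symm
      simp [val, hs]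
    | succ n ih =>
      intro D hx τ
      have hs : (∅ : Finset V) ∪ nbhd G D = {x} ∪ nbhd G D := by
        rw [empty_union]
        exact (union_eq_right.2 (singleton_subset_iff.2 hx)).symm
      have hL : legalMoves G (∅ : Finset V) D = legalMoves G {x} D := by
        ext v; rw [mem_legalMoves, mem_legalMoves, hs]
      have hrec : ∀ v τ', val G (∅ : Finset V) τ' n (insert v D) =
          val G {x} τ' n (insert v D) := fun v τ' =>
        ih _ (nbhd_mono (subset_insert v D) hx) τ'
      show val G ∅ τ (n+1) D = val G {x} τ (n+1) D
      simp only [val, hL, hs]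
      by_cases h : (legalMoves G {x} D).Nonempty
      · rw [dif_pos h, dif_pos h]
        cases τ
        · rw [if_neg (by simp), if_neg (by simp),
            Finset.sup'_congr h rfl fun v _ => hrec v true]
        · rw [if_pos rfl, if_pos rfl,
            Finset.inf'_congr h rfl fun v _ => hrec v false]
      · rw [dif_neg h, dif_neg h]
  exact fun n τ => key n D hx τ

/-- `Attach G P l`: the list `l` can be played in order, each vertex being in the
closed neighborhood of the current played set. -/
def Attach (G : SimpleGraph V) [DecidableRel G.Adj] : Finset V → List V → Prop
  | _, [] => True
  | P, e :: t => e ∈ nbhd G P ∧ Attach G (insert e P) t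

lemma attach_mono : ∀ {l : List V} {P Q : Finset V},
    nbhd G P ⊆ nbhd G Q → Attach G P l → Attach G Q l := by
  intro l
  induction l with
  | nil => intro P Q _ _; trivial
  | cons e t ih =>
    intro P Q h ha
    refine ⟨h ha.1, ih ?_ ha.2⟩
    rw [nbhd_insert, nbhd_insert]
    exact union_subset_union_right h

lemma attach_of_subset (hPQ : P ⊆ Q) : Attach G P l → Attach G Q l :=
  attach_mono (nbhd_mono hPQ)


lemma cover_skip {l : List V} {e : V} (hsub : nbhd G {e} ⊆ nbhd G P)
    (hcov : univ ⊆ nbhd G (P ∪ (e :: l).toFinset)) :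
    univ ⊆ nbhd G (P ∪ l.toFinset) := by
  intro u hu
  have := hcov hu
  rw [List.toFinset_cons, union_insert, nbhd_insert] at this
  rcases mem_union.1 this with h | h
  · exact nbhd_mono subset_union_left (hsub h)
  · exact h

lemma attach_skip {l : List V} {e : V} (hsub : nbhd G {e} ⊆ nbhd G P)
    (ha : Attach G (insert e P) l) : Attach G P l := by
  refine attach_mono ?_ ha
  rw [nbhd_insert]
  exact union_subset hsub subset_rfl

/-- If the plan covers everything but the position is not yet covered,
there is a legal move. -/
lemma exists_legal : ∀ (l : List V) (P : Finset V), Attach G P l →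
    univ ⊆ nbhd G (P ∪ l.toFinset) → ¬ (univ ⊆ nbhd G P) →
    (legalMoves G (∅ : Finset V) P).Nonempty := by
  intro l
  induction l with
  | nil =>
    intro P _ hcov hnc
    exact absurd (by simpa using hcov) hnc
  | cons e t ih =>
    intro P ha hcov hnc
    by_cases hsub : nbhd G {e} ⊆ nbhd G P
    · exact ih P (attach_skip hsub ha.2) (cover_skip hsub hcov) hnc
    · have he : e ∈ nbhd G P := ha.1
      have henP : e ∉ P := fun h => hsub (nbhd_mono (singleton_subset_iff.2 h))
      rcases mem_nbhd.1 he with h | h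
      · exact absurd h henP
      · refine ⟨e, mem_legalMoves.2 ⟨?_, Or.inr h⟩⟩
        rw [empty_union]
        exact hsub

/-- Dominator's finishing strategy: from a nonempty position with an attachable
plan covering everything, the game (with no predomination) lasts at most
`2 * l.length - 1` more moves. -/
lemma dominator_finish : ∀ (l : List V) (n : ℕ) (P : Finset V),
    Fintype.card V ≤ n + P.card → Attach G P l →
    univ ⊆ nbhd G (P ∪ l.toFinset) →
    val G (∅ : Finset V) true n P ≤ ((2 * l.length - 1 : ℕ) : ℕ∞) := by
  intro l
  induction l with
  | nil =>
    intro n P _ _ hcov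
    rw [val_covered (by simpa using hcov)]
    exact zero_le
  | cons e t ih =>
    intro n P hfuel ha hcov
    by_cases hsub : nbhd G {e} ⊆ nbhd G P
    · calc val G ∅ true n P ≤ ((2 * t.length - 1 : ℕ) : ℕ∞) :=
            ih n P hfuel (attach_skip hsub ha.2) (cover_skip hsub hcov)
        _ ≤ _ := by
            apply Nat.cast_le.2
            simp only [List.length_cons]
            omega
    · have he : e ∈ nbhd G P := ha.1
      have henP : e ∉ P := fun h => hsub (nbhd_mono (singleton_subset_iff.2 h))
      have headj : ∃ u ∈ P, G.Adj e u := by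
        rcases mem_nbhd.1 he with h | h
        · exact absurd h henP
        · exact h
      have heL : e ∈ legalMoves G (∅ : Finset V) P :=
        mem_legalMoves.2 ⟨by rwa [empty_union], Or.inr headj⟩
      cases n with
      | zero =>
        have : P = univ := eq_univ_of_card_le (by simpa using hfuel)
        subst this
        rw [val_covered (by simpa using subset_nbhd (G := G) (D := univ))]
        exact zero_le
      | succ n =>
        have hne : (legalMoves G (∅ : Finset V) P).Nonempty := ⟨e, heL⟩
        have hstep : val G (∅ : Finset V) true (n+1) P ≤
            1 + val G (∅ : Finset V) false n (insert e P) := by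
          show (val G ∅ true (n+1) P) ≤ _
          simp only [val, dif_pos hne, if_pos rfl]
          exact add_le_add_right (Finset.inf'_le _ heL) 1
        -- now bound the Staller-to-move value at insert e P
        have hcov' : univ ⊆ nbhd G (insert e P ∪ t.toFinset) := by
          intro u hu
          have := hcov hu
          rwa [List.toFinset_cons, union_insert, ← insert_union] at this
        have hattach' : Attach G (insert e P) t := ha.2
        have hbound : val G (∅ : Finset V) false n (insert e P) ≤
            ((2 * t.length : ℕ) : ℕ∞) := by
          cases n with
          | zero =>
            have : insert e P = univ := by
              apply eq_univ_of_card_le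
              rw [card_insert_of_notMem henP]
              omega
            rw [this, val_covered (by simpa using subset_nbhd (G := G) (D := univ))]
            exact zero_le
          | succ n =>
            rcases (legalMoves G (∅ : Finset V) (insert e P)).eq_empty_or_nonempty with
              hLe | hLne
            · -- no legal moves: must be covered
              have hcv : univ ⊆ nbhd G (insert e P) := by
                by_contra hnc
                exact absurd hLe (Finset.nonempty_iff_ne_empty.1
                  (exists_legal t (insert e P) hattach' hcov' hnc))
              rw [val_covered (by simpa using hcv)]
              exact zero_le
            · show (val G ∅ false (n+1) (insert e P)) ≤ _
              simp only [val, dif_pos hLne, if_neg (by simp : ¬ (false = true))]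
              -- each Staller move w is handled by IH
              have ht_ne : t ≠ [] := by
                rintro rfl
                obtain ⟨w, hw⟩ := hLne
                rcases mem_legalMoves.1 hw with ⟨h1, _⟩
                apply h1
                intro z _
                rw [empty_union]
                simpa using hcov' (mem_univ z)
              have hlen : 1 ≤ t.length := by
                cases t with
                | nil => exact absurd rfl ht_ne
                | cons a b => simp
              have : ∀ w ∈ legalMoves G (∅ : Finset V) (insert e P),
                  val G (∅ : Finset V) true n (insert w (insert e P)) ≤
                    ((2 * t.length - 1 : ℕ) : ℕ∞) := by
                intro w hw
                have hwni : w ∉ insert e P := legalMoves_not_mem hw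
                apply ih n (insert w (insert e P))
                · rw [card_insert_of_notMem hwni, card_insert_of_notMem henP]
                  omega
                · exact attach_of_subset (subset_insert _ _) hattach'
                · exact hcov'.trans (nbhd_mono (union_subset_union_left (subset_insert _ _)))
              calc 1 + (legalMoves G (∅ : Finset V) (insert e P)).sup' hLne
                    (fun w => val G (∅ : Finset V) true n (insert w (insert e P)))
                  ≤ 1 + ((2 * t.length - 1 : ℕ) : ℕ∞) :=
                    add_le_add_right (Finset.sup'_le hLne _ this) 1
                _ = ((2 * t.length : ℕ) : ℕ∞) := by
                    rw [← Nat.cast_one, ← Nat.cast_add]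
                    congr 1
                    omega
        calc val G (∅ : Finset V) true (n+1) P
            ≤ 1 + val G (∅ : Finset V) false n (insert e P) := hstep
          _ ≤ 1 + ((2 * t.length : ℕ) : ℕ∞) := add_le_add_right hbound 1
          _ = ((2 * (e :: t).length - 1 : ℕ) : ℕ∞) := by
              rw [← Nat.cast_one, ← Nat.cast_add]
              congr 1
              simp only [List.length_cons]
              omega


/-- From a finite game value, extract an attachable plan covering everything,
of length at most the value. -/
lemma exists_plan : ∀ (n : ℕ) (τ : Bool) (D : Finset V), D.Nonempty →
    val G S τ n D ≠ ⊤ → ∃ l : List V, Attach G D l ∧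
      univ ⊆ S ∪ nbhd G (D ∪ l.toFinset) ∧ (l.length : ℕ∞) ≤ val G S τ n D := by
  intro n
  induction n with
  | zero =>
    intro τ D _ hfin
    have hcov : univ ⊆ S ∪ nbhd G D := by
      by_contra hc
      exact hfin (by simp [val, hc])
    exact ⟨[], trivial, by simpa using hcov, by simp⟩
  | succ n ih =>
    intro τ D hD hfin
    rcases (legalMoves G S D).eq_empty_or_nonempty with hL | hL
    · have hcov : univ ⊆ S ∪ nbhd G D := by
        by_contra hc
        apply hfin
        cases τ <;> simp [val, hL, hc]
      exact ⟨[], trivial, by simpa using hcov, by simp⟩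
    · have hmain : ∃ t ∈ legalMoves G S D,
          val G S (!τ) n (insert t D) ≠ ⊤ ∧
          1 + val G S (!τ) n (insert t D) ≤ val G S τ (n+1) D := by
        cases τ
        · -- Staller to move: sup'
          simp only [Bool.not_false]
          have hval : val G S false (n+1) D =
              1 + (legalMoves G S D).sup' hL fun v => val G S true n (insert v D) := by
            simp [val, hL]
          obtain ⟨t, ht⟩ := hL
          refine ⟨t, ht, ?_, ?_⟩
          · intro hc
            apply hfin
            rw [hval]
            have : (legalMoves G S D).sup'
                ⟨t, ht⟩ (fun v => val G S true n (insert v D)) = ⊤ :=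
              top_le_iff.1 (hc ▸ Finset.le_sup' (fun v => val G S true n (insert v D)) ht)
            rw [this]
            simp
          · rw [hval]
            exact add_le_add_right (Finset.le_sup' (fun v => val G S true n (insert v D)) ht) 1
        · -- Dominator to move: inf'
          simp only [Bool.not_true]
          have hval : val G S true (n+1) D =
              1 + (legalMoves G S D).inf' hL fun v => val G S false n (insert v D) := by
            simp [val, hL]
          obtain ⟨t, ht, hte⟩ := Finset.exists_mem_eq_inf' hL
            (fun v => val G S false n (insert v D))
          refine ⟨t, ht, ?_, ?_⟩
          · intro hc
            apply hfin
            rw [hval, hte, hc]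
            simp
          · rw [hval, hte]
      obtain ⟨t, ht, htfin, htle⟩ := hmain
      obtain ⟨l, hla, hlc, hll⟩ := ih (!τ) (insert t D) ⟨t, mem_insert_self t D⟩ htfin
      have htn : t ∈ nbhd G D := by
        rcases (mem_legalMoves.1 ht).2 with h | h
        · exact absurd h (Finset.nonempty_iff_ne_empty.1 hD)
        · exact mem_nbhd.2 (Or.inr h)
      refine ⟨t :: l, ⟨htn, hla⟩, ?_, ?_⟩
      · intro u hu
        rw [List.toFinset_cons, union_insert, ← insert_union]
        exact hlc hu
      · calc ((t :: l).length : ℕ∞) = 1 + l.length := by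
              simp only [List.length_cons]
              push_cast
              ring
          _ ≤ 1 + val G S (!τ) n (insert t D) := add_le_add_right hll 1
          _ ≤ val G S τ (n+1) D := htle


lemma exists_finisher (hG : G.Connected) (hV : 2 ≤ Fintype.card V) (hD : D.Nonempty)
    (hx : x ∉ nbhd G D) (hcov : univ ⊆ {x} ∪ nbhd G D) :
    ∃ y, y ∈ legalMoves G (∅ : Finset V) D ∧ univ ⊆ nbhd G (insert y D) := by
  obtain ⟨z, hz⟩ := Fintype.exists_ne_of_one_lt_card (by omega) x
  obtain ⟨y, hxy⟩ : ∃ y, G.Adj x y := by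
    obtain ⟨w⟩ := hG.preconnected x z
    cases w with
    | nil => exact absurd rfl hz
    | cons h p => exact ⟨_, h⟩
  have hyx : y ≠ x := fun h => G.irrefl (h ▸ hxy)
  have hyn : y ∈ nbhd G D := by
    rcases mem_union.1 (hcov (mem_univ y)) with h | h
    · exact absurd (mem_singleton.1 h) hyx
    · exact h
  have hyadj : ∃ u ∈ D, G.Adj y u := by
    rcases mem_nbhd.1 hyn with h | h
    · exact absurd (mem_nbhd.2 (Or.inr ⟨y, h, hxy⟩)) hx
    · exact h
  have hxy' : x ∈ nbhd G {y} := mem_nbhd.2 (Or.inr ⟨y, mem_singleton_self y, hxy⟩)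
  refine ⟨y, mem_legalMoves.2 ⟨?_, Or.inr hyadj⟩, ?_⟩
  · intro hcontra
    have := hcontra hxy'
    rw [empty_union] at this
    exact hx this
  · intro u hu
    rcases mem_union.1 (hcov hu) with h | h
    · rw [mem_singleton.1 h]
      exact nbhd_mono (singleton_subset_iff.2 (mem_insert_self y D)) hxy'
    · exact nbhd_mono (subset_insert y D) h

/-- The key imagination-strategy bound, by induction on positions. -/
lemma key (hG : G.Connected) (hV : 2 ≤ Fintype.card V) (x : V) :
    ∀ (n : ℕ) (D : Finset V), Fintype.card V ≤ n + D.card → x ∉ nbhd G D →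
      (val G (∅ : Finset V) true n D ≤ max (2 * val G {x} true n D) 1) ∧
      (D.Nonempty → val G (∅ : Finset V) false n D ≤ max (2 * val G {x} false n D) 1) := by
  intro n
  induction n with
  | zero =>
    intro D hfuel hx
    exact absurd (subset_nbhd (mem_univ x)) (eq_univ_of_card_le (by simpa using hfuel) ▸ hx)
  | succ n ih =>
    intro D hfuel hx
    constructor
    · -- Dominator to move
      rcases (legalMoves G {x} D).eq_empty_or_nonempty with hLx | hLx
      · by_cases hcov : univ ⊆ {x} ∪ nbhd G D
        · -- imagined game over but x undominated: one move finishes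
          have hDne : D.Nonempty := by
            rcases D.eq_empty_or_nonempty with rfl | h
            · exfalso
              have h1 : (univ : Finset V) ⊆ {x} := by
                simpa [nbhd_empty] using hcov
              have := Finset.card_le_card h1
              simp [Finset.card_univ] at this
              omega
            · exact h
          obtain ⟨y, hyL, hycov⟩ := exists_finisher hG hV hDne hx hcov
          have hstep : val G (∅ : Finset V) true (n+1) D ≤
              1 + val G (∅ : Finset V) false n (insert y D) := by
            have hne0 : (legalMoves G (∅ : Finset V) D).Nonempty := ⟨y, hyL⟩
            show (val G ∅ true (n+1) D) ≤ _
            simp only [val, dif_pos hne0, if_pos rfl]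
            exact add_le_add_right (Finset.inf'_le _ hyL) 1
          rw [val_covered (by simpa using hycov) false n] at hstep
          calc val G (∅ : Finset V) true (n+1) D ≤ 1 + 0 := hstep
            _ = 1 := by simp
            _ ≤ _ := le_max_right _ _
        · -- imagined value is ⊤
          have hvx : val G {x} true (n+1) D = ⊤ := by
            simp [val, Finset.not_nonempty_iff_eq_empty.2 hLx, hcov]
            rw [insert_eq, ← univ_subset_iff]; exact hcov
          rw [hvx]
          exact le_top.trans ((le_mul_of_one_le_left (zero_le) one_le_two).trans
            (le_max_left _ _))
      · -- imagined legal move exists: mirror the optimal one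
        have hvx : val G {x} true (n+1) D =
            1 + (legalMoves G {x} D).inf' hLx
              fun v => val G {x} false n (insert v D) := by
          simp [val, hLx]
        obtain ⟨t, htL, hte⟩ := Finset.exists_mem_eq_inf' hLx
          (fun v => val G {x} false n (insert v D))
        have htL0 : t ∈ legalMoves G (∅ : Finset V) D :=
          legalMoves_anti (empty_subset _) htL
        have hA : val G (∅ : Finset V) true (n+1) D ≤
            1 + val G (∅ : Finset V) false n (insert t D) := by
          have hne0 : (legalMoves G (∅ : Finset V) D).Nonempty := ⟨t, htL0⟩
          show (val G ∅ true (n+1) D) ≤ _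
          simp only [val, dif_pos hne0, if_pos rfl]
          exact add_le_add_right (Finset.inf'_le _ htL0) 1
        rw [hvx, hte]
        by_cases hxt : x ∈ nbhd G (insert t D)
        · rw [val_eq_of_dominated hxt n false] at hA
          exact hA.trans ((le_mul_of_one_le_left (zero_le) one_le_two).trans
            (le_max_left _ _))
        · have hfuel' : Fintype.card V ≤ n + (insert t D).card := by
            rw [card_insert_of_notMem (legalMoves_not_mem htL0)]
            omega
          have hCF := (ih (insert t D) hfuel' hxt).2 ⟨t, mem_insert_self t D⟩
          set b := val G {x} false n (insert t D) with hbdef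
          calc val G (∅ : Finset V) true (n+1) D
              ≤ 1 + val G (∅ : Finset V) false n (insert t D) := hA
            _ ≤ 1 + max (2 * b) 1 := add_le_add_right hCF 1
            _ ≤ 1 + (1 + 2 * b) :=
                add_le_add_right (max_le le_add_self le_self_add) 1
            _ = 2 * (1 + b) := by ring
            _ ≤ max (2 * (1 + b)) 1 := le_max_left _ _
    · -- Staller to move
      intro hD
      by_cases hb : val G {x} false (n+1) D = ⊤
      · rw [hb]
        exact le_top.trans ((le_mul_of_one_le_left (zero_le) one_le_two).trans
          (le_max_left _ _))
      rcases (legalMoves G (∅ : Finset V) D).eq_empty_or_nonempty with hL0 | hL0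
      · exfalso
        have hLx : legalMoves G {x} D = ∅ :=
          subset_empty.1 (hL0 ▸ legalMoves_anti (empty_subset _))
        have hcovx : univ ⊆ {x} ∪ nbhd G D := by
          by_contra hc
          exact hb (by simp [val, hLx, hc]; rw [insert_eq, ← univ_subset_iff]; exact hc)
        obtain ⟨y, hyL, _⟩ := exists_finisher hG hV hD hx hcovx
        rw [hL0] at hyL
        exact absurd hyL (notMem_empty y)
      · have hB : val G (∅ : Finset V) false (n+1) D =
            1 + (legalMoves G (∅ : Finset V) D).sup' hL0
              fun v => val G (∅ : Finset V) true n (insert v D) := by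
          simp [val, hL0]
        rcases (legalMoves G {x} D).eq_empty_or_nonempty with hLx | hLx
        · -- imagined game already over: any real move finishes
          have hcovx : univ ⊆ {x} ∪ nbhd G D := by
            by_contra hc
            exact hb (by simp [val, hLx, hc]; rw [insert_eq, ← univ_subset_iff]; exact hc)
          have heach : ∀ s ∈ legalMoves G (∅ : Finset V) D,
              val G (∅ : Finset V) true n (insert s D) ≤ 0 := by
            intro s hs
            have h1 := (mem_legalMoves.1 hs).1
            obtain ⟨z, hz1, hz2⟩ := Finset.not_subset.1 h1
            rw [empty_union] at hz2
            have hzx : z = x := by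
              rcases mem_union.1 (hcovx (mem_univ z)) with h | h
              · exact mem_singleton.1 h
              · exact absurd h hz2
            have hxs : x ∈ nbhd G {s} := hzx ▸ hz1
            rw [val_covered ?_ true n]
            intro u _
            rw [empty_union]
            rcases mem_union.1 (hcovx (mem_univ u)) with h | h
            · rw [mem_singleton.1 h]
              exact nbhd_mono (singleton_subset_iff.2 (mem_insert_self s D)) hxs
            · exact nbhd_mono (subset_insert s D) h
          rw [hB]
          calc 1 + (legalMoves G (∅ : Finset V) D).sup' hL0
                (fun v => val G (∅ : Finset V) true n (insert v D))
              ≤ 1 + 0 := add_le_add_right (Finset.sup'_le hL0 _ heach) 1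
            _ = 1 := by simp
            _ ≤ _ := le_max_right _ _
        · -- main case
          have hvb : val G {x} false (n+1) D =
              1 + (legalMoves G {x} D).sup' hLx
                fun v => val G {x} true n (insert v D) := by
            simp [val, hLx]
          set σ := (legalMoves G {x} D).sup' hLx
            (fun v => val G {x} true n (insert v D)) with hσdef
          have hσfin : σ ≠ ⊤ := by
            intro hc
            exact hb (by rw [hvb, hc]; simp)
          obtain ⟨c, hc⟩ : ∃ c : ℕ, (c : ℕ∞) = σ := ⟨σ.toNat, ENat.coe_toNat hσfin⟩
          have heach : ∀ s ∈ legalMoves G (∅ : Finset V) D,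
              val G (∅ : Finset V) true n (insert s D) ≤ ((1 + 2*c : ℕ) : ℕ∞) := by
            intro s hs
            have hsfuel : Fintype.card V ≤ n + (insert s D).card := by
              rw [card_insert_of_notMem (legalMoves_not_mem hs)]
              omega
            by_cases hsx : s ∈ legalMoves G {x} D
            · have hhs : val G {x} true n (insert s D) ≤ σ :=
                Finset.le_sup' (fun v => val G {x} true n (insert v D)) hsx
              by_cases hxs : x ∈ nbhd G (insert s D)
              · rw [val_eq_of_dominated hxs n true]
                refine hhs.trans ?_
                rw [← hc]
                exact Nat.cast_le.2 (by omega)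
              · refine ((ih (insert s D) hsfuel hxs).1).trans ?_
                apply max_le
                · have h2 : 2 * val G {x} true n (insert s D) ≤ 2 * σ :=
                    mul_le_mul_right hhs 2
                  refine h2.trans ?_
                  rw [← hc]
                  calc (2 : ℕ∞) * (c : ℕ∞) = ((2 * c : ℕ) : ℕ∞) := by push_cast; ring
                    _ ≤ ((1 + 2*c : ℕ) : ℕ∞) := Nat.cast_le.2 (by omega)
                · calc (1 : ℕ∞) = ((1 : ℕ) : ℕ∞) := by simp
                    _ ≤ _ := Nat.cast_le.2 (by omega)
            · -- wasted move
              obtain ⟨h1, h2⟩ := mem_legalMoves.1 hs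
              have hsub : nbhd G {s} ⊆ {x} ∪ nbhd G D := by
                by_contra hns
                exact hsx (mem_legalMoves.2 ⟨hns, h2⟩)
              obtain ⟨z, hz1, hz2⟩ := Finset.not_subset.1 h1
              rw [empty_union] at hz2
              have hzx : z = x := by
                rcases mem_union.1 (hsub hz1) with h | h
                · exact mem_singleton.1 h
                · exact absurd h hz2
              have hxs : x ∈ nbhd G {s} := hzx ▸ hz1
              obtain ⟨l, hla, hlc, hll⟩ := exists_plan (n+1) false D hD hb
              have hl_len : l.length ≤ c + 1 := by
                rw [hvb, ← hc] at hll
                have h4 : (l.length : ℕ∞) ≤ ((c + 1 : ℕ) : ℕ∞) :=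
                  hll.trans_eq (by push_cast; ring)
                exact Nat.cast_le.1 h4
              refine (dominator_finish l n (insert s D) hsfuel
                (attach_of_subset (subset_insert s D) hla) ?_).trans ?_
              · intro u hu
                rcases mem_union.1 (hlc hu) with h | h
                · rw [mem_singleton.1 h]
                  exact nbhd_mono ((singleton_subset_iff.2 (mem_insert_self s D)).trans
                    subset_union_left) hxs
                · exact nbhd_mono (union_subset_union_left (subset_insert s D)) h
              · exact Nat.cast_le.2 (by omega)
          rw [hB, hvb, ← hc]
          calc 1 + (legalMoves G (∅ : Finset V) D).sup' hL0
                (fun v => val G (∅ : Finset V) true n (insert v D))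
              ≤ 1 + ((1 + 2*c : ℕ) : ℕ∞) :=
                add_le_add_right (Finset.sup'_le hL0 _ heach) 1
            _ = 2 * (1 + (c : ℕ∞)) := by push_cast; ring
            _ ≤ max (2 * (1 + (c : ℕ∞))) 1 := le_max_left _ _

end ConnDomGame

open ConnDomGame in
/-- If `G` is a connected graph on at least two vertices and `x ∈ V(G)`, then
`γ_cg(G|x) ≥ ⌈γ_cg(G)/2⌉`  (note `⌈m/2⌉ = (m+1)/2` in natural number arithmetic). -/
theorem gammaCG_predominated_lower {V : Type*} [Fintype V] [DecidableEq V]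
    (G : SimpleGraph V) [DecidableRel G.Adj] (hG : G.Connected)
    (hV : 2 ≤ Fintype.card V) (x : V) :
    ∀ m : ℕ, gammaCG G ∅ = (m : ℕ∞) → (((m + 1) / 2 : ℕ) : ℕ∞) ≤ gammaCG G {x} := by

  intro m hm
  have hkey := (key hG hV x (Fintype.card V) ∅ (by simp) (by simp [nbhd_empty])).1
  rw [show (gammaCG G ∅ : ℕ∞) = ConnDomGame.val G ∅ true (Fintype.card V) ∅ from rfl] at hm
  have hk1 : (1 : ℕ∞) ≤ gammaCG G {x} := by
    obtain ⟨n, hn⟩ : ∃ n, Fintype.card V = n + 1 := ⟨Fintype.card V - 1, by omega⟩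
    obtain ⟨v, hv⟩ := Fintype.exists_ne_of_one_lt_card (by omega) x
    have hvL : v ∈ legalMoves G {x} (∅ : Finset V) := by
      refine mem_legalMoves.2 ⟨?_, Or.inl rfl⟩
      intro hcon
      have := hcon (subset_nbhd (mem_singleton_self v))
      rw [nbhd_empty, union_empty] at this
      exact hv (mem_singleton.1 this)
    have hne : (legalMoves G {x} (∅ : Finset V)).Nonempty := ⟨v, hvL⟩
    show (1 : ℕ∞) ≤ ConnDomGame.val G {x} true (Fintype.card V) ∅
    rw [hn]
    show (1 : ℕ∞) ≤ ConnDomGame.val G {x} true (n + 1) ∅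
    simp only [ConnDomGame.val, dif_pos hne, if_pos rfl]
    exact le_self_add
  rcases eq_or_ne (gammaCG G {x}) ⊤ with hk | hk
  · rw [hk]; exact le_top
  obtain ⟨kn, hkn⟩ : ∃ kn : ℕ, (kn : ℕ∞) = gammaCG G {x} :=
    ⟨(gammaCG G {x}).toNat, ENat.coe_toNat hk⟩
  have h2 : (m : ℕ∞) ≤ 2 * gammaCG G {x} := by
    rw [← hm]
    refine hkey.trans ?_
    have h1le : (1 : ℕ∞) ≤ 2 * gammaCG G {x} :=
      hk1.trans (le_mul_of_one_le_left (zero_le) one_le_two)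
    exact max_le le_rfl h1le
  rw [← hkn] at h2 ⊢
  have h3 : (m : ℕ∞) ≤ ((2 * kn : ℕ) : ℕ∞) := h2.trans_eq (by push_cast; ring)
  have h4 : m ≤ 2 * kn := Nat.cast_le.1 h3
  exact Nat.cast_le.2 (by omega)
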